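/- arXiv:2603.21899 — 10 statements merged into one kernel-verified Lean document; each statement's English description precedes it below -/
import Mathlib

section
/- Let C be a real number with 0 < |C| < 1. The set of complex roots of the polynomial q(z) = z^4 + 2(2C^2 - 1)z^2 + 1 is exactly {e^{iθ}, e^{-iθ}, -e^{iθ}, -e^{-iθ}}, where θ = (1/2)·arccos(1 - 2C^2); moreover θ ∈ (0, π/2), so these are four distinct points, all of modulus one. -/
open Real Complex ComplexConjugate

/-! With `w = e^{iθ}` we have `cos 2θ = 1 - 2C²`, so the middle coefficient `2(2C² - 1)` is
`-(w² + w̄²)`; since `w w̄ = 1`, the quartic factors as `(z² - w²)(z² - w̄²)`. For `θ ∈ (0, π/2)`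
both the real and the imaginary part of `w` are nonzero, which separates `±w, ±w̄`. -/

theorem setOf_quartic_eq_zero_of_mul_eq_one {K : Type*} [Field K] {w v : K} (hwv : w * v = 1) :
    {z : K | z ^ 4 - (w ^ 2 + v ^ 2) * z ^ 2 + 1 = 0} = {w, v, -w, -v} := by
  ext z
  have hfactor : z ^ 4 - (w ^ 2 + v ^ 2) * z ^ 2 + 1 = (z - w) * (z + w) * ((z - v) * (z + v)) := by
    linear_combination (-(w * v) - 1) * hwv
  rw [Set.mem_ofPred_eq, hfactor]
  simp only [mul_eq_zero, sub_eq_zero, add_eq_zero_iff_eq_neg, Set.mem_insert_iff,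
    Set.mem_singleton_iff]
  tauto

theorem Complex.pairwise_ne_conj_neg {w : ℂ} (hre : w.re ≠ 0) (him : w.im ≠ 0) :
    [w, conj w, -w, -conj w].Pairwise (· ≠ ·) := by
  simp only [List.pairwise_cons, List.mem_cons, List.not_mem_nil, or_false,
    List.Pairwise.nil, ne_eq, Complex.ext_iff, conj_re, conj_im, neg_re, neg_im]
  grind

theorem Complex.exp_mul_I_sq_add_exp_neg_mul_I_sq (x : ℂ) :
    exp (x * I) ^ 2 + exp (-x * I) ^ 2 = 2 * cos (2 * x) := by
  rw [two_cos, ← exp_nat_mul, ← exp_nat_mul]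
  push_cast; ring_nf

theorem Complex.exp_neg_ofReal_mul_I (θ : ℝ) : exp (-(θ : ℂ) * I) = conj (exp (θ * I)) := by
  rw [← exp_conj]; simp

theorem Real.arccos_mem_Ioo {x : ℝ} (hx : x ∈ Set.Ioo (-1) 1) : arccos x ∈ Set.Ioo 0 π :=
  ⟨arccos_pos.2 hx.2, arccos_lt_pi.2 hx.1⟩

theorem one_sub_two_mul_sq_mem_Ioo {C : ℝ} (hC0 : 0 < |C|) (hC1 : |C| < 1) :
    1 - 2 * C ^ 2 ∈ Set.Ioo (-1) 1 := by
  have h0 : 0 < C ^ 2 := by rw [← sq_abs]; positivity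
  have h1 : C ^ 2 < 1 := by rw [← sq_abs]; nlinarith
  constructor <;> linarith

/-- For `0 < |C| < 1`, the roots of `z^4 + 2(2C^2-1)z^2 + 1` are exactly
`{e^{iθ}, e^{-iθ}, -e^{iθ}, -e^{-iθ}}` with `θ = arccos(1 - 2C^2)/2 ∈ (0, π/2)`;
these are four pairwise distinct points, all of modulus one. -/
theorem branch_points_of_leapfrog (C : ℝ) (hC0 : 0 < |C|) (hC1 : |C| < 1) :
    let θ : ℝ := Real.arccos (1 - 2 * C ^ 2) / 2
    (0 < θ ∧ θ < Real.pi / 2) ∧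
    ({z : ℂ | z ^ 4 + 2 * (2 * (C : ℂ) ^ 2 - 1) * z ^ 2 + 1 = 0} =
      {Complex.exp (θ * Complex.I), Complex.exp (-(θ : ℂ) * Complex.I),
        -Complex.exp (θ * Complex.I), -Complex.exp (-(θ : ℂ) * Complex.I)}) ∧
    ([Complex.exp (θ * Complex.I), Complex.exp (-(θ : ℂ) * Complex.I),
        -Complex.exp (θ * Complex.I), -Complex.exp (-(θ : ℂ) * Complex.I)] : List ℂ).Pairwise (· ≠ ·) ∧
    (∀ z : ℂ, z ^ 4 + 2 * (2 * (C : ℂ) ^ 2 - 1) * z ^ 2 + 1 = 0 → ‖z‖ = 1) := by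
  intro θ
  have hx := one_sub_two_mul_sq_mem_Ioo hC0 hC1
  have hθ : 0 < θ ∧ θ < π / 2 := by
    obtain ⟨h0, hπ⟩ := arccos_mem_Ioo hx
    constructor <;> simp only [θ] <;> linarith
  have hcos : Real.cos (2 * θ) = 1 - 2 * C ^ 2 := by
    rw [show 2 * θ = arccos (1 - 2 * C ^ 2) by simp only [θ]; ring]
    exact cos_arccos hx.1.le hx.2.le
  rw [exp_neg_ofReal_mul_I]
  set w := exp (θ * I)
  have hnorm : ‖w‖ = 1 := norm_exp_ofReal_mul_I θ
  have hcoef : 2 * (2 * (C : ℂ) ^ 2 - 1) = -(w ^ 2 + conj w ^ 2) := by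
    rw [← exp_neg_ofReal_mul_I, exp_mul_I_sq_add_exp_neg_mul_I_sq, ← ofReal_ofNat, ← ofReal_mul,
      ← ofReal_cos, hcos]
    push_cast; ring
  have hroots : {z : ℂ | z ^ 4 + 2 * (2 * (C : ℂ) ^ 2 - 1) * z ^ 2 + 1 = 0} =
      {w, conj w, -w, -conj w} := by
    have hwconj : w * conj w = 1 := by rw [mul_conj', hnorm]; simp
    rw [← setOf_quartic_eq_zero_of_mul_eq_one hwconj]
    simp only [hcoef, neg_mul, ← sub_eq_add_neg]
  refine ⟨hθ, hroots, pairwise_ne_conj_neg ?_ ?_, fun z hz => ?_⟩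
  · rw [exp_ofReal_mul_I_re]; exact (cos_pos_of_mem_Ioo ⟨by linarith, hθ.2⟩).ne'
  · rw [exp_ofReal_mul_I_im]; exact (sin_pos_of_pos_of_lt_pi hθ.1 (by linarith)).ne'
  · have hz' : z ∈ ({w, conj w, -w, -conj w} : Set ℂ) := hroots ▸ hz
    rcases hz' with rfl | rfl | rfl | rfl <;> simp [hnorm]
end

section
/- Let C ∈ (-1, 0) and ν ∈ (0, |C|). Set θ_SP(ν) = (1/2)·arccos((1 + ν^2 - 2C^2)/(1 - ν^2)) and θ_BP = (1/2)·arccos(1 - 2C^2). Then the set of complex roots of the polynomial φ₄(z) = (1-ν^2)z^4 + 2(2C^2 - ν^2 - 1)z^2 + (1-ν^2) is exactly {e^{iθ_SP(ν)}, e^{-iθ_SP(ν)}, -e^{iθ_SP(ν)}, -e^{-iθ_SP(ν)}} (four distinct points of modulus one), and 0 < θ_SP(ν) < θ_BP. -/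
/-!
Put `a = (1 + ν² - 2C²)/(1 - ν²)`, so that `φ₄(z) = (1 - ν²)(z⁴ - 2a z² + 1)`. Whenever `e f = 1`,
`z⁴ - (e² + f²) z² + 1 = (z² - e²)(z² - f²)`; with `e = e^{iθ}`, `f = e^{-iθ}` and `cos 2θ = a` this
exhibits the four roots `±e^{±iθ}`, all on the unit circle. For `0 < ν < |C| < 1` one has
`1 - 2C² < a < 1`, so `2θ_SP = arccos a` lies in `(0, π)`, which makes the roots distinct, and
`θ_SP < θ_BP` because `arccos` is strictly decreasing.
-/

open Complex

theorem List.pairwise_ne_pm {G : Type*} [AddGroup G] [IsAddTorsionFree G] {e f : G}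
    (he : e ≠ 0) (hf : f ≠ 0) (hef : e ≠ f) (hef' : e ≠ -f) :
    [e, f, -e, -f].Pairwise (· ≠ ·) := by
  have hfe : f ≠ -e := fun h => hef' (by rw [h, neg_neg])
  simp [self_eq_neg, he, hf, hef, hef', hfe]

section Quartic

variable {R : Type*} [CommRing R] {e f : R}

theorem quartic_eq_mul_of_mul_eq_one (hef : e * f = 1) (z : R) :
    z ^ 4 - (e ^ 2 + f ^ 2) * z ^ 2 + 1 = (z - e) * (z + e) * ((z - f) * (z + f)) := by
  linear_combination (-(e * f) - 1) * hef

theorem quartic_eq_zero_iff_of_mul_eq_one [NoZeroDivisors R] (hef : e * f = 1) (z : R) :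
    z ^ 4 - (e ^ 2 + f ^ 2) * z ^ 2 + 1 = 0 ↔ z = e ∨ z = f ∨ z = -e ∨ z = -f := by
  simp only [quartic_eq_mul_of_mul_eq_one hef, mul_eq_zero, sub_eq_zero, add_eq_zero_iff_eq_neg]
  tauto

end Quartic

namespace Complex

theorem exp_mul_I_mul_exp_neg_mul_I (θ : ℂ) : exp (θ * I) * exp (-θ * I) = 1 := by
  rw [← exp_add, ← add_mul, add_neg_cancel, zero_mul, exp_zero]

theorem exp_mul_I_sq_add_exp_neg_mul_I_sq_s1 (θ : ℂ) :
    exp (θ * I) ^ 2 + exp (-θ * I) ^ 2 = 2 * cos (2 * θ) := by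
  rw [two_cos, ← exp_nat_mul, ← exp_nat_mul]
  push_cast
  ring_nf

theorem exp_mul_I_ne_exp_neg_mul_I {θ : ℂ} (h : sin θ ≠ 0) : exp (θ * I) ≠ exp (-θ * I) := by
  intro heq
  apply h
  have := two_sin θ
  rw [heq, sub_self, zero_mul] at this
  simpa using this

theorem exp_mul_I_ne_neg_exp_neg_mul_I {θ : ℂ} (h : cos θ ≠ 0) :
    exp (θ * I) ≠ -exp (-θ * I) := by
  intro heq
  apply h
  have := two_cos θ
  rw [heq, neg_add_cancel] at this
  simpa using this

theorem pairwise_ne_exp_mul_I {θ : ℝ} (h₀ : 0 < θ) (h₁ : θ < Real.pi / 2) :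
    [exp (θ * I), exp (-(θ : ℂ) * I), -exp (θ * I), -exp (-(θ : ℂ) * I)].Pairwise (· ≠ ·) := by
  have hsin : sin θ ≠ 0 := by
    rw [← ofReal_sin]
    exact ofReal_ne_zero.mpr (Real.sin_pos_of_pos_of_lt_pi h₀ (by linarith [Real.pi_pos])).ne'
  have hcos : cos θ ≠ 0 := by
    rw [← ofReal_cos]
    exact ofReal_ne_zero.mpr (Real.cos_pos_of_mem_Ioo ⟨by linarith, h₁⟩).ne'
  exact List.pairwise_ne_pm (exp_ne_zero _) (exp_ne_zero _)
    (exp_mul_I_ne_exp_neg_mul_I hsin) (exp_mul_I_ne_neg_exp_neg_mul_I hcos)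

theorem norm_exp_neg_ofReal_mul_I (θ : ℝ) : ‖exp (-(θ : ℂ) * I)‖ = 1 := by
  rw [← ofReal_neg]; exact norm_exp_ofReal_mul_I _

end Complex

theorem Real.half_arccos_mem_Ioo {a : ℝ} (h₁ : -1 < a) (h₂ : a < 1) :
    Real.arccos a / 2 ∈ Set.Ioo 0 (Real.pi / 2) :=
  ⟨by linarith [Real.arccos_pos.mpr h₂], by linarith [Real.arccos_lt_pi.mpr h₁]⟩

-- `cos 2θ_SP` in the paper's notation.
noncomputable def saddleCos (C ν : ℝ) : ℝ := (1 + ν ^ 2 - 2 * C ^ 2) / (1 - ν ^ 2)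

section TransitionZone

variable {C ν : ℝ}

theorem neg_one_lt_one_sub_two_mul_sq (hC : |C| < 1) : -1 < 1 - 2 * C ^ 2 := by
  nlinarith [sq_abs C, abs_nonneg C]

theorem saddleCos_mem_Ioo (hC : |C| < 1) (hν : ν ∈ Set.Ioo 0 |C|) :
    saddleCos C ν ∈ Set.Ioo (1 - 2 * C ^ 2) 1 := by
  obtain ⟨hν₀, hνC⟩ := hν
  have hνC2 : ν ^ 2 < C ^ 2 := by nlinarith [sq_abs C]
  have hC2 : C ^ 2 < 1 := by nlinarith [sq_abs C, abs_nonneg C]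
  have hden : 0 < 1 - ν ^ 2 := by linarith
  constructor
  · rw [saddleCos, lt_div_iff₀ hden]
    nlinarith [mul_pos (pow_pos hν₀ 2) (sub_pos.mpr hC2)]
  · rw [saddleCos, div_lt_one hden]
    linarith

theorem phi4_eq_zero_iff {θ : ℝ} (hν : ν ^ 2 ≠ 1) (hθ : Real.cos (2 * θ) = saddleCos C ν)
    (z : ℂ) :
    (1 - (ν : ℂ) ^ 2) * z ^ 4 + 2 * (2 * (C : ℂ) ^ 2 - (ν : ℂ) ^ 2 - 1) * z ^ 2
        + (1 - (ν : ℂ) ^ 2) = 0 ↔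
      z = exp (θ * I) ∨ z = exp (-(θ : ℂ) * I) ∨ z = -exp (θ * I) ∨ z = -exp (-(θ : ℂ) * I) := by
  have hden : (1 - (ν : ℂ) ^ 2) ≠ 0 := by exact_mod_cast sub_ne_zero.mpr (Ne.symm hν)
  have hcos : (1 - (ν : ℂ) ^ 2) * cos (2 * θ) = 1 + (ν : ℂ) ^ 2 - 2 * (C : ℂ) ^ 2 := by
    rw [← ofReal_ofNat, ← ofReal_mul, ← ofReal_cos, hθ, saddleCos]
    push_cast
    field_simp
  have hfactor : (1 - (ν : ℂ) ^ 2) * z ^ 4 + 2 * (2 * (C : ℂ) ^ 2 - (ν : ℂ) ^ 2 - 1) * z ^ 2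
      + (1 - (ν : ℂ) ^ 2) = (1 - (ν : ℂ) ^ 2) *
        (z ^ 4 - (exp (θ * I) ^ 2 + exp (-(θ : ℂ) * I) ^ 2) * z ^ 2 + 1) := by
    rw [exp_mul_I_sq_add_exp_neg_mul_I_sq_s1]
    linear_combination 2 * z ^ 2 * hcos
  rw [hfactor, mul_eq_zero, or_iff_right hden,
    quartic_eq_zero_iff_of_mul_eq_one (exp_mul_I_mul_exp_neg_mul_I _)]

end TransitionZone

/-- For `C ∈ (-1,0)` and `ν ∈ (0,|C|)`, the roots of
`φ₄(z) = (1-ν²)z⁴ + 2(2C² - ν² - 1)z² + (1-ν²)` are exactly the four distinct points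
`{e^{iθ_SP}, e^{-iθ_SP}, -e^{iθ_SP}, -e^{-iθ_SP}}` of modulus one, where
`θ_SP = arccos((1+ν²-2C²)/(1-ν²))/2`, and `0 < θ_SP < θ_BP = arccos(1-2C²)/2`. -/
theorem saddle_points_transition_zone (C ν : ℝ) (hC : C ∈ Set.Ioo (-1 : ℝ) 0)
    (hν : ν ∈ Set.Ioo 0 |C|) :
    let θSP : ℝ := Real.arccos ((1 + ν ^ 2 - 2 * C ^ 2) / (1 - ν ^ 2)) / 2
    let θBP : ℝ := Real.arccos (1 - 2 * C ^ 2) / 2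
    ({z : ℂ | (1 - (ν : ℂ) ^ 2) * z ^ 4 + 2 * (2 * (C : ℂ) ^ 2 - (ν : ℂ) ^ 2 - 1) * z ^ 2
        + (1 - (ν : ℂ) ^ 2) = 0} =
      {Complex.exp (θSP * Complex.I), Complex.exp (-(θSP : ℂ) * Complex.I),
        -Complex.exp (θSP * Complex.I), -Complex.exp (-(θSP : ℂ) * Complex.I)}) ∧
    ([Complex.exp (θSP * Complex.I), Complex.exp (-(θSP : ℂ) * Complex.I),
        -Complex.exp (θSP * Complex.I), -Complex.exp (-(θSP : ℂ) * Complex.I)] : List ℂ).Pairwise (· ≠ ·) ∧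
    (∀ z : ℂ, (1 - (ν : ℂ) ^ 2) * z ^ 4 + 2 * (2 * (C : ℂ) ^ 2 - (ν : ℂ) ^ 2 - 1) * z ^ 2
        + (1 - (ν : ℂ) ^ 2) = 0 → ‖z‖ = 1) ∧
    0 < θSP ∧ θSP < θBP := by
  intro θSP θBP
  have hC' : |C| < 1 := abs_lt.mpr ⟨hC.1, hC.2.trans one_pos⟩
  have hBP := neg_one_lt_one_sub_two_mul_sq hC'
  obtain ⟨hSP, hSP₁⟩ := saddleCos_mem_Ioo hC' hν
  obtain ⟨hθ₀, hθ₁⟩ := Real.half_arccos_mem_Ioo (hBP.trans hSP) hSP₁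
  have hν1 : ν ^ 2 ≠ 1 := by nlinarith [sq_abs C, hν.2, hν.1]
  have hcos : Real.cos (2 * θSP) = saddleCos C ν := by
    rw [mul_div_cancel₀ _ two_ne_zero]
    exact Real.cos_arccos (hBP.trans hSP).le hSP₁.le
  have hroots := phi4_eq_zero_iff hν1 hcos
  refine ⟨Set.ext hroots, pairwise_ne_exp_mul_I hθ₀ hθ₁, fun z hz => ?_, hθ₀, ?_⟩
  · rcases (hroots z).mp hz with rfl | rfl | rfl | rfl <;>
      simp only [norm_neg, norm_exp_ofReal_mul_I, norm_exp_neg_ofReal_mul_I]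
  · exact div_lt_div_of_pos_right (Real.arccos_lt_arccos hBP.le hSP hSP₁.le) two_pos
end

section
/- Let C ∈ (-1, 0), C ≠ 0, and ν ∈ (|C|, 1). Set w₊ = (√(1-C^2) + √(ν^2-C^2))^2/(1-ν^2) and w₋ = (√(1-C^2) - √(ν^2-C^2))^2/(1-ν^2). Then 0 < w₋ < 1 < w₊, w₊·w₋ = 1, and the set of complex roots of the polynomial φ₄(z) = (1-ν^2)z^4 + 2(2C^2 - ν^2 - 1)z^2 + (1-ν^2) is exactly the four real numbers {√(w₊), -√(w₊), √(w₋), -√(w₋)}; in particular two roots lie in the open unit disc and two roots have modulus strictly greater than one. -/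
/-!
With `a = √(1 - C²)` and `b = √(ν² - C²)` one has `0 < b < a` and `a² - b² = 1 - ν²`, so
`w₊ = (a + b)² / (a² - b²)` and `w₋ = (a - b)² / (a² - b²)` multiply to `1`, and `w₋ < 1` because
`a - b < a + b`. Since moreover `(1 - ν²)(w₊ + w₋) = 2(a² + b²) = 2(1 + ν² - 2C²)`, the palindromic
quartic `φ₄` factors as `(1 - ν²)(z² - w₊)(z² - w₋)`.
-/

theorem setOf_palindromic_biquadratic_eq_zero {K : Type*} [Field K] {c e r s : K} (hc : c ≠ 0)
    (hsum : c * (r ^ 2 + s ^ 2) = -e) (hprod : r ^ 2 * s ^ 2 = 1) :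
    {z : K | c * z ^ 4 + e * z ^ 2 + c = 0} = {r, -r, s, -s} := by
  ext z
  have hfactor : c * z ^ 4 + e * z ^ 2 + c = c * ((z - r) * (z + r) * (z - s) * (z + s)) := by
    linear_combination z ^ 2 * hsum - c * hprod
  rw [Set.mem_ofPred_eq, hfactor]
  simp only [Set.mem_insert_iff, Set.mem_singleton_iff, mul_eq_zero, hc, false_or, sub_eq_zero,
    add_eq_zero_iff_eq_neg, or_assoc]

section SquareQuotients

variable {K : Type*} [Field K] {a b d : K}

theorem sq_add_div_mul_sq_sub_div (hd : a ^ 2 - b ^ 2 = d) (hd0 : d ≠ 0) :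
    (a + b) ^ 2 / d * ((a - b) ^ 2 / d) = 1 := by
  rw [div_mul_div_comm, div_eq_one_iff_eq (mul_ne_zero hd0 hd0), ← hd]
  ring

theorem mul_sq_add_div_add_sq_sub_div (hd0 : d ≠ 0) :
    d * ((a + b) ^ 2 / d + (a - b) ^ 2 / d) = 2 * (a ^ 2 + b ^ 2) := by
  rw [← add_div, mul_div_cancel₀ _ hd0]
  ring

variable [LinearOrder K] [IsStrictOrderedRing K]

theorem sq_sub_div_pos (hd : a ^ 2 - b ^ 2 = d) (hb : 0 ≤ b) (hba : b < a) :
    0 < (a - b) ^ 2 / d :=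
  div_pos (pow_pos (sub_pos.2 hba) 2) (by rw [← hd]; nlinarith)

theorem sq_sub_div_lt_one (hd : a ^ 2 - b ^ 2 = d) (hb : 0 < b) (hba : b < a) :
    (a - b) ^ 2 / d < 1 := by
  rw [← hd, div_lt_one (by nlinarith)]
  nlinarith

end SquareQuotients

theorem norm_ofReal_sqrt (x : ℝ) : ‖((√x : ℝ) : ℂ)‖ = √x := by
  rw [Complex.norm_real, Real.norm_of_nonneg (Real.sqrt_nonneg x)]

theorem ofReal_sqrt_sq {x : ℝ} (hx : 0 ≤ x) : ((√x : ℝ) : ℂ) ^ 2 = x := by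
  rw [← Complex.ofReal_pow, Real.sq_sqrt hx]

theorem saddle_points_ahead_of_front_general (C ν : ℝ)
    (hν : ν ∈ Set.Ioo |C| 1) :
    let wp : ℝ := (Real.sqrt (1 - C ^ 2) + Real.sqrt (ν ^ 2 - C ^ 2)) ^ 2 / (1 - ν ^ 2)
    let wm : ℝ := (Real.sqrt (1 - C ^ 2) - Real.sqrt (ν ^ 2 - C ^ 2)) ^ 2 / (1 - ν ^ 2)
    (0 < wm ∧ wm < 1 ∧ 1 < wp) ∧ wp * wm = 1 ∧
    ({z : ℂ | (1 - (ν : ℂ) ^ 2) * z ^ 4 + 2 * (2 * (C : ℂ) ^ 2 - (ν : ℂ) ^ 2 - 1) * z ^ 2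
        + (1 - (ν : ℂ) ^ 2) = 0} =
      {((Real.sqrt wp : ℝ) : ℂ), -((Real.sqrt wp : ℝ) : ℂ),
        ((Real.sqrt wm : ℝ) : ℂ), -((Real.sqrt wm : ℝ) : ℂ)}) ∧
    (‖((Real.sqrt wm : ℝ) : ℂ)‖ < 1 ∧ ‖(-((Real.sqrt wm : ℝ) : ℂ))‖ < 1) ∧
    (1 < ‖((Real.sqrt wp : ℝ) : ℂ)‖ ∧ 1 < ‖(-((Real.sqrt wp : ℝ) : ℂ))‖) := by
  intro wp wm
  obtain ⟨hCν, hν1⟩ := hν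
  have hC2 : C ^ 2 < ν ^ 2 := sq_lt_sq.2 (by rwa [abs_of_pos ((abs_nonneg C).trans_lt hCν)])
  have hν2 : ν ^ 2 < 1 := by nlinarith [abs_nonneg C]
  have ha2 : √(1 - C ^ 2) ^ 2 = 1 - C ^ 2 := Real.sq_sqrt (by linarith)
  have hb2 : √(ν ^ 2 - C ^ 2) ^ 2 = ν ^ 2 - C ^ 2 := Real.sq_sqrt (by linarith)
  have hb : 0 < √(ν ^ 2 - C ^ 2) := Real.sqrt_pos.2 (by linarith)
  have hba : √(ν ^ 2 - C ^ 2) < √(1 - C ^ 2) := Real.sqrt_lt_sqrt (by linarith) (by linarith)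
  have hd : √(1 - C ^ 2) ^ 2 - √(ν ^ 2 - C ^ 2) ^ 2 = 1 - ν ^ 2 := by rw [ha2, hb2]; ring
  have hwm0 : 0 < wm := sq_sub_div_pos hd hb.le hba
  have hwm1 : wm < 1 := sq_sub_div_lt_one hd hb hba
  have hprod : wp * wm = 1 := sq_add_div_mul_sq_sub_div hd (by linarith)
  have hwp : wp = wm⁻¹ := eq_inv_of_mul_eq_one_left hprod
  have hwp1 : 1 < wp := hwp ▸ (one_lt_inv₀ hwm0).2 hwm1
  have hsum : (1 - ν ^ 2) * (wp + wm) = -(2 * (2 * C ^ 2 - ν ^ 2 - 1)) := by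
    rw [mul_sq_add_div_add_sq_sub_div (by linarith), ha2, hb2]
    ring
  refine ⟨⟨hwm0, hwm1, hwp1⟩, hprod, ?_, ?_, ?_⟩
  · apply setOf_palindromic_biquadratic_eq_zero
    · exact_mod_cast (sub_pos.2 hν2).ne'
    · rw [ofReal_sqrt_sq (zero_lt_one.trans hwp1).le, ofReal_sqrt_sq hwm0.le]
      exact_mod_cast hsum
    · rw [ofReal_sqrt_sq (zero_lt_one.trans hwp1).le, ofReal_sqrt_sq hwm0.le]
      exact_mod_cast hprod
  · simp only [norm_neg, norm_ofReal_sqrt, and_self]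
    exact (Real.sqrt_lt' one_pos).2 (by rwa [one_pow])
  · simp only [norm_neg, norm_ofReal_sqrt, and_self]
    exact (Real.lt_sqrt zero_le_one).2 (by rwa [one_pow])

/-- For `C ∈ (-1,0)` and `ν ∈ (|C|,1)`, with
`w₊ = (√(1-C²)+√(ν²-C²))²/(1-ν²)` and `w₋ = (√(1-C²)-√(ν²-C²))²/(1-ν²)`,
one has `0 < w₋ < 1 < w₊`, `w₊·w₋ = 1`, and the roots of
`φ₄(z) = (1-ν²)z⁴ + 2(2C²-ν²-1)z² + (1-ν²)` are exactly
`{√w₊, -√w₊, √w₋, -√w₋}`; in particular two roots lie in the open unit disc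
and two have modulus strictly greater than one. -/
theorem saddle_points_ahead_of_front (C ν : ℝ) (hC : C ∈ Set.Ioo (-1 : ℝ) 0) (hC0 : C ≠ 0)
    (hν : ν ∈ Set.Ioo |C| 1) :
    let wp : ℝ := (Real.sqrt (1 - C ^ 2) + Real.sqrt (ν ^ 2 - C ^ 2)) ^ 2 / (1 - ν ^ 2)
    let wm : ℝ := (Real.sqrt (1 - C ^ 2) - Real.sqrt (ν ^ 2 - C ^ 2)) ^ 2 / (1 - ν ^ 2)
    (0 < wm ∧ wm < 1 ∧ 1 < wp) ∧ wp * wm = 1 ∧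
    ({z : ℂ | (1 - (ν : ℂ) ^ 2) * z ^ 4 + 2 * (2 * (C : ℂ) ^ 2 - (ν : ℂ) ^ 2 - 1) * z ^ 2
        + (1 - (ν : ℂ) ^ 2) = 0} =
      {((Real.sqrt wp : ℝ) : ℂ), -((Real.sqrt wp : ℝ) : ℂ),
        ((Real.sqrt wm : ℝ) : ℂ), -((Real.sqrt wm : ℝ) : ℂ)}) ∧
    (‖((Real.sqrt wm : ℝ) : ℂ)‖ < 1 ∧ ‖(-((Real.sqrt wm : ℝ) : ℂ))‖ < 1) ∧
    (1 < ‖((Real.sqrt wp : ℝ) : ℂ)‖ ∧ 1 < ‖(-((Real.sqrt wp : ℝ) : ℂ))‖) :=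
  saddle_points_ahead_of_front_general C ν hν
end

section
/- Let C ∈ (-1, 0) and ν ∈ (0, |C|). Set θ_SP(ν) = (1/2)·arccos((1 + ν^2 - 2C^2)/(1 - ν^2)) and ξ_SP(ν) = arccos(-(ν/C)·√((1-C^2)/(1-ν^2))). Then the pairs (z, κ) = (e^{iθ_SP(ν)}, -e^{-iξ_SP(ν)}) and (z, κ) = (-e^{iθ_SP(ν)}, e^{-iξ_SP(ν)}) both satisfy the leap-frog characteristic equation z^2 - C·z·(κ^{-1} - κ) - 1 = 0, and likewise the complex-conjugate pairs (e^{-iθ_SP(ν)}, -e^{iξ_SP(ν)}) and (-e^{-iθ_SP(ν)}, e^{iξ_SP(ν)}). -/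
open Real Complex


-- complex algebra helper
lemma keyC (c a b : ℝ) (h : Real.sin a + c * Real.sin b = 0) :
    (Complex.exp ((a:ℂ) * Complex.I)) ^ 2
      - (c:ℂ) * Complex.exp ((a:ℂ) * Complex.I)
        * ((-Complex.exp (-(b:ℂ) * Complex.I))⁻¹ - (-Complex.exp (-(b:ℂ) * Complex.I)))
      - 1 = 0 ∧
    (-Complex.exp ((a:ℂ) * Complex.I)) ^ 2
      - (c:ℂ) * (-Complex.exp ((a:ℂ) * Complex.I))
        * ((Complex.exp (-(b:ℂ) * Complex.I))⁻¹ - Complex.exp (-(b:ℂ) * Complex.I))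
      - 1 = 0 := by
  have hinv : (Complex.exp (-(b:ℂ) * Complex.I))⁻¹ = Complex.exp ((b:ℂ) * Complex.I) := by
    rw [neg_mul, Complex.exp_neg, inv_inv]
  have ea : Complex.exp ((a:ℂ) * Complex.I)
      = (Real.cos a : ℂ) + (Real.sin a : ℂ) * Complex.I := by
    rw [Complex.exp_mul_I, Complex.ofReal_cos, Complex.ofReal_sin]
  have eb : Complex.exp ((b:ℂ) * Complex.I)
      = (Real.cos b : ℂ) + (Real.sin b : ℂ) * Complex.I := by
    rw [Complex.exp_mul_I, Complex.ofReal_cos, Complex.ofReal_sin]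
  have ebn : Complex.exp (-(b:ℂ) * Complex.I)
      = (Real.cos b : ℂ) - (Real.sin b : ℂ) * Complex.I := by
    rw [Complex.exp_mul_I, Complex.cos_neg, Complex.sin_neg, Complex.ofReal_cos,
      Complex.ofReal_sin]; ring
  have hpa : (Real.sin a : ℂ)^2 + (Real.cos a : ℂ)^2 = 1 := by
    exact_mod_cast Real.sin_sq_add_cos_sq a
  have hs : (Real.sin a : ℂ) + (c:ℂ) * (Real.sin b : ℂ) = 0 := by exact_mod_cast h
  constructor
  · rw [inv_neg, hinv, ea, eb, ebn]
    linear_combination hpa + (2*(Real.cos a:ℂ)*Complex.I - 2*(Real.sin a:ℂ)) * hs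
      + ((Real.sin a:ℂ)^2 + 2*(c:ℂ)*(Real.sin b:ℂ)*(Real.sin a:ℂ)) * Complex.I_sq
  · rw [hinv, ea, eb, ebn]
    linear_combination hpa + (2*(Real.cos a:ℂ)*Complex.I - 2*(Real.sin a:ℂ)) * hs
      + ((Real.sin a:ℂ)^2 + 2*(c:ℂ)*(Real.sin b:ℂ)*(Real.sin a:ℂ)) * Complex.I_sq


lemma keyR (C ν : ℝ) (hC1 : -1 < C) (hC0 : C < 0) (hν0 : 0 < ν) (hνC : ν < |C|) :
    Real.sin (Real.arccos ((1 + ν ^ 2 - 2 * C ^ 2) / (1 - ν ^ 2)) / 2)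
      + C * Real.sin (Real.arccos (-(ν / C) * Real.sqrt ((1 - C ^ 2) / (1 - ν ^ 2)))) = 0 := by
  have habs : |C| = -C := abs_of_neg hC0
  rw [habs] at hνC
  have hν2 : ν ^ 2 < C ^ 2 := by nlinarith
  have hC2 : C ^ 2 < 1 := by nlinarith
  have hden : 0 < 1 - ν ^ 2 := by nlinarith
  have hCne : C ≠ 0 := ne_of_lt hC0
  set x : ℝ := (1 + ν ^ 2 - 2 * C ^ 2) / (1 - ν ^ 2) with hx
  have hx1 : -1 ≤ x := by
    rw [hx, le_div_iff₀ hden]; nlinarith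
  have hx2 : x ≤ 1 := by
    rw [hx, div_le_one hden]; nlinarith
  set θ := Real.arccos x / 2 with hθ
  -- sin θ
  have hcosθ : Real.cos (2 * θ) = x := by
    rw [hθ]; rw [mul_div_cancel₀ _ (two_ne_zero)]; exact Real.cos_arccos hx1 hx2
  have hsinθsq : Real.sin θ ^ 2 = (C ^ 2 - ν ^ 2) / (1 - ν ^ 2) := by
    have h1 : Real.cos (2 * θ) = 1 - 2 * Real.sin θ ^ 2 := by
      rw [Real.cos_two_mul]
      nlinarith [Real.sin_sq_add_cos_sq θ]
    rw [hcosθ, hx] at h1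
    rw [eq_div_iff (ne_of_gt hden)]
    rw [div_eq_iff (ne_of_gt hden)] at h1
    nlinarith
  have hθnn : 0 ≤ Real.sin θ := by
    apply Real.sin_nonneg_of_nonneg_of_le_pi
    · have := Real.arccos_nonneg x
      rw [hθ]; linarith
    · have := Real.arccos_le_pi x
      rw [hθ]; linarith [Real.pi_pos]
  have hsinθ : Real.sin θ = Real.sqrt ((C ^ 2 - ν ^ 2) / (1 - ν ^ 2)) := by
    rw [← hsinθsq, Real.sqrt_sq_eq_abs, _root_.abs_of_nonneg hθnn]
  -- sin ξ
  set y : ℝ := -(ν / C) * Real.sqrt ((1 - C ^ 2) / (1 - ν ^ 2)) with hy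
  have hy2 : y ^ 2 = (ν ^ 2 / C ^ 2) * ((1 - C ^ 2) / (1 - ν ^ 2)) := by
    rw [hy, mul_pow, neg_pow, Real.sq_sqrt (by
      apply div_nonneg <;> nlinarith)]
    ring_nf
  have hsinξ : Real.sin (Real.arccos y) = Real.sqrt ((C ^ 2 - ν ^ 2) / (C ^ 2 * (1 - ν ^ 2))) := by
    have h12 : 1 - y ^ 2 = (C ^ 2 - ν ^ 2) / (C ^ 2 * (1 - ν ^ 2)) := by
      rw [hy2]; field_simp; ring
    rw [Real.sin_arccos, h12]
  rw [hsinθ, hsinξ]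
  have : C * Real.sqrt ((C ^ 2 - ν ^ 2) / (C ^ 2 * (1 - ν ^ 2)))
      = - Real.sqrt ((C ^ 2 - ν ^ 2) / (1 - ν ^ 2)) := by
    have h1 : (C ^ 2 - ν ^ 2) / (1 - ν ^ 2)
        = C ^ 2 * ((C ^ 2 - ν ^ 2) / (C ^ 2 * (1 - ν ^ 2))) := by
      field_simp
    rw [h1, Real.sqrt_mul (by positivity), Real.sqrt_sq_eq_abs, habs]
    ring
  linarith


/-- For `C ∈ (-1,0)` and `ν ∈ (0,|C|)`, with
`θ_SP = arccos((1+ν²-2C²)/(1-ν²))/2` and `ξ_SP = arccos(-(ν/C)√((1-C²)/(1-ν²)))`,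
the pairs `(e^{iθ_SP}, -e^{-iξ_SP})`, `(-e^{iθ_SP}, e^{-iξ_SP})` and their complex
conjugates `(e^{-iθ_SP}, -e^{iξ_SP})`, `(-e^{-iθ_SP}, e^{iξ_SP})` all satisfy the
leap-frog characteristic equation `z² - C·z·(κ⁻¹ - κ) - 1 = 0`. -/
theorem saddle_pairs_satisfy_characteristic_equation (C ν : ℝ)
    (hC : C ∈ Set.Ioo (-1 : ℝ) 0) (hν : ν ∈ Set.Ioo 0 |C|) :
    let θSP : ℝ := Real.arccos ((1 + ν ^ 2 - 2 * C ^ 2) / (1 - ν ^ 2)) / 2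
    let ξSP : ℝ := Real.arccos (-(ν / C) * Real.sqrt ((1 - C ^ 2) / (1 - ν ^ 2)))
    let P : ℂ → ℂ → Prop := fun z κ => z ^ 2 - (C : ℂ) * z * (κ⁻¹ - κ) - 1 = 0
    P (Complex.exp (θSP * Complex.I)) (-Complex.exp (-(ξSP : ℂ) * Complex.I)) ∧
    P (-Complex.exp (θSP * Complex.I)) (Complex.exp (-(ξSP : ℂ) * Complex.I)) ∧
    P (Complex.exp (-(θSP : ℂ) * Complex.I)) (-Complex.exp (ξSP * Complex.I)) ∧
    P (-Complex.exp (-(θSP : ℂ) * Complex.I)) (Complex.exp (ξSP * Complex.I)) := by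
  intro θSP ξSP P
  obtain ⟨hC1, hC0⟩ := hC
  obtain ⟨hν0, hνC⟩ := hν
  have h : Real.sin θSP + C * Real.sin ξSP = 0 := keyR C ν hC1 hC0 hν0 hνC
  have h2 : Real.sin (-θSP) + C * Real.sin (-ξSP) = 0 := by
    rw [Real.sin_neg, Real.sin_neg]; linarith
  have k1 := keyC C θSP ξSP h
  have k2 := keyC C (-θSP) (-ξSP) h2
  push_cast [neg_neg] at k2
  exact ⟨k1.1, k1.2, k2.1, k2.2⟩
end

section
/- Let C ∈ (-1, 0) and ν ∈ (0, |C|). Set θ_SP(ν) = (1/2)·arccos((1 + ν^2 - 2C^2)/(1 - ν^2)) and ξ_SP(ν) = arccos(-(ν/C)·√((1-C^2)/(1-ν^2))). Then: sin(θ_SP(ν)) = √((C^2-ν^2)/(1-ν^2)); cos(θ_SP(ν)) = √((1-C^2)/(1-ν^2)); ξ_SP(ν) ∈ (0, π/2); sin(ξ_SP(ν)) = (1/|C|)·√((C^2-ν^2)/(1-ν^2)); and cos(ξ_SP(ν)) = -(ν/C)·√((1-C^2)/(1-ν^2)). -/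
open Real

/-!
Both angles are inverse cosines, so everything follows from the half-angle formulas and
`sin (arccos x) = √(1 - x²)` once the arguments are simplified. Writing
`p = (C² - ν²)/(1 - ν²)` and `q = (1 - C²)/(1 - ν²)`, both positive for `0 < ν < |C| < 1`,
the argument `A` of `θ_SP` satisfies `(1 - A)/2 = p` and `(1 + A)/2 = q`, while the argument
`x = -(ν/C)√q` of `ξ_SP` is positive with `1 - x² = p / C²`; in particular `0 < x < 1`.
-/

namespace Real

theorem sin_arccos_div_two {x : ℝ} (h₁ : -1 ≤ x) (h₂ : x ≤ 1) :
    sin (arccos x / 2) = √((1 - x) / 2) := by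
  rw [sin_half_eq_sqrt (arccos_nonneg x) (by linarith [arccos_le_pi x, pi_pos]),
    cos_arccos h₁ h₂]

theorem cos_arccos_div_two {x : ℝ} (h₁ : -1 ≤ x) (h₂ : x ≤ 1) :
    cos (arccos x / 2) = √((1 + x) / 2) := by
  rw [cos_half (by linarith [arccos_nonneg x, pi_pos]) (arccos_le_pi x), cos_arccos h₁ h₂]

end Real

namespace LeapFrog

lemma one_sub_div_two_eq {a b : ℝ} (ha : 1 - a ≠ 0) :
    (1 - (1 + a - 2 * b) / (1 - a)) / 2 = (b - a) / (1 - a) := by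
  field_simp
  ring

lemma one_add_div_two_eq {a b : ℝ} (ha : 1 - a ≠ 0) :
    (1 + (1 + a - 2 * b) / (1 - a)) / 2 = (1 - b) / (1 - a) := by
  field_simp
  ring

lemma one_sub_sq_neg_div_mul_sqrt {C ν : ℝ} (hC : C ≠ 0) (hν : 1 - ν ^ 2 ≠ 0)
    (hq : 0 ≤ (1 - C ^ 2) / (1 - ν ^ 2)) :
    1 - (-(ν / C) * √((1 - C ^ 2) / (1 - ν ^ 2))) ^ 2
      = (C ^ 2 - ν ^ 2) / (1 - ν ^ 2) / C ^ 2 := by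
  rw [mul_pow, neg_sq, sq_sqrt hq]
  field_simp
  ring

end LeapFrog

open LeapFrog

/-- For `C ∈ (-1,0)` and `ν ∈ (0,|C|)`, with
`θ_SP = arccos((1+ν²-2C²)/(1-ν²))/2` and `ξ_SP = arccos(-(ν/C)√((1-C²)/(1-ν²)))`:
`sin θ_SP = √((C²-ν²)/(1-ν²))`, `cos θ_SP = √((1-C²)/(1-ν²))`, `ξ_SP ∈ (0, π/2)`,
`sin ξ_SP = (1/|C|)·√((C²-ν²)/(1-ν²))`, and `cos ξ_SP = -(ν/C)·√((1-C²)/(1-ν²))`. -/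
theorem saddle_point_angles_trig_identities (C ν : ℝ)
    (hC : C ∈ Set.Ioo (-1 : ℝ) 0) (hν : ν ∈ Set.Ioo 0 |C|) :
    let θSP : ℝ := Real.arccos ((1 + ν ^ 2 - 2 * C ^ 2) / (1 - ν ^ 2)) / 2
    let ξSP : ℝ := Real.arccos (-(ν / C) * Real.sqrt ((1 - C ^ 2) / (1 - ν ^ 2)))
    Real.sin θSP = Real.sqrt ((C ^ 2 - ν ^ 2) / (1 - ν ^ 2)) ∧
    Real.cos θSP = Real.sqrt ((1 - C ^ 2) / (1 - ν ^ 2)) ∧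
    (0 < ξSP ∧ ξSP < Real.pi / 2) ∧
    Real.sin ξSP = (1 / |C|) * Real.sqrt ((C ^ 2 - ν ^ 2) / (1 - ν ^ 2)) ∧
    Real.cos ξSP = -(ν / C) * Real.sqrt ((1 - C ^ 2) / (1 - ν ^ 2)) := by
  intro θSP ξSP
  obtain ⟨hC₁, hC₀⟩ := hC
  obtain ⟨hν₀, hνC⟩ := hν
  have hνC_sq : ν ^ 2 < C ^ 2 := by
    simpa only [sq_abs] using pow_lt_pow_left₀ hνC hν₀.le two_ne_zero
  have hden : 0 < 1 - ν ^ 2 := by nlinarith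
  have hp : 0 < (C ^ 2 - ν ^ 2) / (1 - ν ^ 2) := div_pos (by linarith) hden
  have hq : 0 < (1 - C ^ 2) / (1 - ν ^ 2) := div_pos (by nlinarith) hden
  have hA₁ : -1 ≤ (1 + ν ^ 2 - 2 * C ^ 2) / (1 - ν ^ 2) := by
    linarith [one_add_div_two_eq (b := C ^ 2) hden.ne']
  have hA₂ : (1 + ν ^ 2 - 2 * C ^ 2) / (1 - ν ^ 2) ≤ 1 := by
    linarith [one_sub_div_two_eq (b := C ^ 2) hden.ne']
  set x := -(ν / C) * √((1 - C ^ 2) / (1 - ν ^ 2))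
  have hx₀ : 0 < x := mul_pos (neg_pos.2 (div_neg_of_pos_of_neg hν₀ hC₀)) (sqrt_pos.2 hq)
  have hx : 1 - x ^ 2 = (C ^ 2 - ν ^ 2) / (1 - ν ^ 2) / C ^ 2 :=
    one_sub_sq_neg_div_mul_sqrt hC₀.ne hden.ne' hq.le
  have hx₁ : x < 1 := by
    have : 0 < 1 - x ^ 2 := hx ▸ div_pos hp (sq_pos_of_neg hC₀)
    nlinarith
  refine ⟨?_, ?_, ⟨arccos_pos.2 hx₁, arccos_lt_pi_div_two.2 hx₀⟩, ?_,
    cos_arccos (by linarith) hx₁.le⟩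
  · rw [sin_arccos_div_two hA₁ hA₂, one_sub_div_two_eq hden.ne']
  · rw [cos_arccos_div_two hA₁ hA₂, one_add_div_two_eq hden.ne']
  · rw [sin_arccos, hx, sqrt_div' _ (sq_nonneg C), sqrt_sq_eq_abs, div_eq_inv_mul, one_div]
end

section
/- Let C ∈ (-1, 0) and define κ_s(z) = (1 - z^2 + √(z^4 + 2(2C^2-1)z^2 + 1))/(2Cz), where √ denotes the principal complex square root. Then κ_s is well defined and complex-differentiable in a neighborhood of z = -1 and of z = 1 (the radicand equals 4C^2 > 0 at z = ±1), and κ_s(1) = -1, κ_s(-1) = 1, and the complex derivative of κ_s at z = -1 equals -1/C. -/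
open Real Complex Filter Topology

/-!
At `z = ±1` the radicand equals `4C² = (-2C)²`, and `-2C` has positive real part, so the
principal square root there is `-2C` rather than `2C`; this fixes the values `κ_s(±1) = ∓1`.
The radicand stays in the slit plane near `±1`, where the principal square root is holomorphic,
and the derivative at `-1` follows from the quotient rule with `(√R)' = R' / (2√R)`.
-/

theorem HasDerivAt.cpow_half {f : ℂ → ℂ} {f' x : ℂ} (hf : HasDerivAt f f' x)
    (hx : f x ∈ slitPlane) :
    HasDerivAt (fun y => f y ^ (1 / 2 : ℂ)) (f' / (2 * f x ^ (1 / 2 : ℂ))) x := by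
  convert hf.cpow_const hx using 1
  rw [show (1 / 2 : ℂ) - 1 = -(1 / 2) by ring, cpow_neg]
  field_simp

lemma four_mul_sq_cpow_half {c : ℂ} (hc : c.re < 0) : (4 * c ^ 2) ^ (1 / 2 : ℂ) = -2 * c := by
  rw [show 4 * c ^ 2 = (-2 * c) ^ 2 by ring, one_div]
  exact sq_cpow_two_inv (by simpa using mul_neg_of_pos_of_neg two_pos hc)

lemma sq_mem_slitPlane {x : ℂ} (hx : x.re ≠ 0) : x ^ 2 ∈ slitPlane := by
  rcases eq_or_ne x.im 0 with him | him
  · refine mem_slitPlane_iff.2 (.inl ?_)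
    rw [sq, mul_re, him, mul_zero, sub_zero]
    exact mul_self_pos.2 hx
  · refine mem_slitPlane_iff.2 (.inr ?_)
    rw [show (x ^ 2).im = 2 * x.re * x.im by rw [sq, mul_im]; ring]
    exact mul_ne_zero (mul_ne_zero two_ne_zero hx) him

lemma four_mul_sq_mem_slitPlane {c : ℂ} (hc : c.re ≠ 0) : 4 * c ^ 2 ∈ slitPlane := by
  rw [show 4 * c ^ 2 = (2 * c) ^ 2 by ring]
  exact sq_mem_slitPlane (by simpa using hc)

namespace LeapFrog

noncomputable section

def radicand (c z : ℂ) : ℂ := z ^ 4 + 2 * (2 * c ^ 2 - 1) * z ^ 2 + 1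

def stableRoot (c z : ℂ) : ℂ := (1 - z ^ 2 + radicand c z ^ (1 / 2 : ℂ)) / (2 * c * z)

lemma radicand_one (c : ℂ) : radicand c 1 = 4 * c ^ 2 := by
  unfold radicand; ring

lemma radicand_neg_one (c : ℂ) : radicand c (-1) = 4 * c ^ 2 := by
  unfold radicand; ring

lemma continuous_radicand (c : ℂ) : Continuous (radicand c) := by
  unfold radicand; fun_prop

lemma hasDerivAt_radicand (c z : ℂ) :
    HasDerivAt (radicand c) (4 * z ^ 3 + 4 * (2 * c ^ 2 - 1) * z) z := by
  have h := ((hasDerivAt_pow 4 z).add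
    ((hasDerivAt_pow 2 z).const_mul (2 * (2 * c ^ 2 - 1)))).add_const 1
  exact h.congr_deriv (by push_cast; ring)

lemma hasDerivAt_stableRoot {c z : ℂ} (hc : c ≠ 0) (hz : z ≠ 0)
    (hR : radicand c z ∈ slitPlane) :
    HasDerivAt (stableRoot c)
      (((-(2 * z) + (4 * z ^ 3 + 4 * (2 * c ^ 2 - 1) * z) / (2 * radicand c z ^ (1 / 2 : ℂ)))
          * (2 * c * z) - (1 - z ^ 2 + radicand c z ^ (1 / 2 : ℂ)) * (2 * c)) / (2 * c * z) ^ 2)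
      z := by
  have hnum : HasDerivAt (fun w => 1 - w ^ 2 + radicand c w ^ (1 / 2 : ℂ))
      (-(2 * z) + (4 * z ^ 3 + 4 * (2 * c ^ 2 - 1) * z) / (2 * radicand c z ^ (1 / 2 : ℂ))) z :=
    (((hasDerivAt_pow 2 z).const_sub 1).add ((hasDerivAt_radicand c z).cpow_half hR)).congr_deriv
      (by push_cast; ring)
  have hden : HasDerivAt (fun w => 2 * c * w) (2 * c) z := by
    simpa using (hasDerivAt_id z).const_mul (2 * c)
  exact hnum.div hden (by simp [hc, hz])

lemma eventually_differentiableAt_stableRoot {c z : ℂ} (hc : c ≠ 0) (hz : z ≠ 0)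
    (hR : radicand c z ∈ slitPlane) :
    ∀ᶠ w in 𝓝 z, DifferentiableAt ℂ (stableRoot c) w := by
  have hopen : IsOpen {w | w ≠ 0 ∧ radicand c w ∈ slitPlane} :=
    isOpen_ne.inter (isOpen_slitPlane.preimage (continuous_radicand c))
  filter_upwards [hopen.mem_nhds ⟨hz, hR⟩] with w ⟨hw, hRw⟩
  exact (hasDerivAt_stableRoot hc hw hRw).differentiableAt

section NegativeCourantNumber

variable {c : ℂ} (hc : c.re < 0)
include hc

lemma ne_zero_of_re_neg : c ≠ 0 := by
  rintro rfl
  simp at hc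

lemma stableRoot_one : stableRoot c 1 = -1 := by
  have := ne_zero_of_re_neg hc
  rw [stableRoot, radicand_one, four_mul_sq_cpow_half hc]
  field_simp
  ring

lemma stableRoot_neg_one : stableRoot c (-1) = 1 := by
  have := ne_zero_of_re_neg hc
  rw [stableRoot, radicand_neg_one, four_mul_sq_cpow_half hc]
  field_simp
  ring

lemma eventually_differentiableAt_stableRoot_one :
    ∀ᶠ z in 𝓝 1, DifferentiableAt ℂ (stableRoot c) z :=
  eventually_differentiableAt_stableRoot (ne_zero_of_re_neg hc) one_ne_zero
    (radicand_one c ▸ four_mul_sq_mem_slitPlane hc.ne)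

lemma eventually_differentiableAt_stableRoot_neg_one :
    ∀ᶠ z in 𝓝 (-1), DifferentiableAt ℂ (stableRoot c) z :=
  eventually_differentiableAt_stableRoot (ne_zero_of_re_neg hc) (neg_ne_zero.2 one_ne_zero)
    (radicand_neg_one c ▸ four_mul_sq_mem_slitPlane hc.ne)

lemma deriv_stableRoot_neg_one : deriv (stableRoot c) (-1) = -1 / c := by
  have hc0 := ne_zero_of_re_neg hc
  rw [(hasDerivAt_stableRoot hc0 (neg_ne_zero.2 one_ne_zero)
    (radicand_neg_one c ▸ four_mul_sq_mem_slitPlane hc.ne)).deriv,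
    radicand_neg_one, four_mul_sq_cpow_half hc]
  field_simp
  ring

end NegativeCourantNumber

end

end LeapFrog

/-- For `C ∈ (-1,0)`, the stable root
`κ_s(z) = (1 - z² + √(z⁴ + 2(2C²-1)z² + 1))/(2Cz)` (principal complex square root)
is complex-differentiable in a neighborhood of `z = ±1` (the radicand equals
`4C² > 0` at `z = ±1`), with `κ_s(1) = -1`, `κ_s(-1) = 1`, and `κ_s'(-1) = -1/C`. -/
theorem stable_root_near_pm_one (C : ℝ) (hC : C ∈ Set.Ioo (-1 : ℝ) 0) :
    let ks : ℂ → ℂ := fun z =>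
      (1 - z ^ 2 + (z ^ 4 + 2 * (2 * (C : ℂ) ^ 2 - 1) * z ^ 2 + 1) ^ ((1 : ℂ) / 2)) /
        (2 * (C : ℂ) * z)
    ((1 : ℂ) ^ 4 + 2 * (2 * (C : ℂ) ^ 2 - 1) * (1 : ℂ) ^ 2 + 1 = 4 * (C : ℂ) ^ 2) ∧
    ((-1 : ℂ) ^ 4 + 2 * (2 * (C : ℂ) ^ 2 - 1) * (-1 : ℂ) ^ 2 + 1 = 4 * (C : ℂ) ^ 2) ∧
    (0 < 4 * C ^ 2) ∧
    (∀ᶠ z in 𝓝 (1 : ℂ), DifferentiableAt ℂ ks z) ∧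
    (∀ᶠ z in 𝓝 (-1 : ℂ), DifferentiableAt ℂ ks z) ∧
    ks 1 = -1 ∧ ks (-1) = 1 ∧ deriv ks (-1) = -1 / (C : ℂ) := by
  have hc : (C : ℂ).re < 0 := by simpa using hC.2
  exact ⟨LeapFrog.radicand_one C, LeapFrog.radicand_neg_one C, by nlinarith [hC.2],
    LeapFrog.eventually_differentiableAt_stableRoot_one hc,
    LeapFrog.eventually_differentiableAt_stableRoot_neg_one hc,
    LeapFrog.stableRoot_one hc, LeapFrog.stableRoot_neg_one hc,
    LeapFrog.deriv_stableRoot_neg_one hc⟩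
end

section
/- Let C ∈ (-1, 0), let b, b̃ : ℕ → ℝ be finitely supported, and define h(z) = z^2 - z·Σ_{k∈ℕ} b_k·κ_s(z)^k - Σ_{k∈ℕ} b̃_k·κ_s(z)^k, where κ_s(z) = (1 - z^2 + √(z^4 + 2(2C^2-1)z^2 + 1))/(2Cz) with the principal complex square root. Then h is complex-differentiable in a neighborhood of z = -1, and h(-1) = 1 + Σ_{k∈ℕ} b_k - Σ_{k∈ℕ} b̃_k, while the complex derivative satisfies h'(-1) = -(2 + Σ_{k∈ℕ} b_k + (1/C)·Σ_{k∈ℕ} k·(b_k - b̃_k)). -/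
/-!
At `z = -1` the discriminant `z⁴ + 2(2C² - 1)z² + 1` equals `(-2C)²` with `-2C > 0`, so its
principal square root is `-2C`, which lies off the branch cut. Hence `κ_s` is holomorphic near
`-1`, with `κ_s(-1) = 1` and `κ_s'(-1) = -1/C`, and `h` is `z² - z·P(κ_s z) - Q(κ_s z)` for
polynomials `P, Q`; the chain rule does the rest.
-/

open Real Complex Filter Topology

noncomputable def stableRootDisc (C : ℝ) (z : ℂ) : ℂ :=
  z ^ 4 + 2 * (2 * (C : ℂ) ^ 2 - 1) * z ^ 2 + 1

/-- The stable characteristic root `κ_s`. -/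
noncomputable def stableRoot (C : ℝ) (z : ℂ) : ℂ :=
  (1 - z ^ 2 + stableRootDisc C z ^ ((1 : ℂ) / 2)) / (2 * (C : ℂ) * z)

noncomputable def powSum (c : ℕ →₀ ℝ) (w : ℂ) : ℂ :=
  c.sum fun k a => (a : ℂ) * w ^ k

section powSum

variable (c : ℕ →₀ ℝ)

theorem powSum_one : powSum c 1 = c.sum fun _ a => (a : ℂ) := by
  simp [powSum]

theorem hasDerivAt_powSum_one : HasDerivAt (powSum c) (c.sum fun k a => (k : ℂ) * a) 1 := by
  unfold powSum Finsupp.sum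
  refine HasDerivAt.fun_sum fun k _ => ?_
  simpa [mul_comm] using (hasDerivAt_pow k (1 : ℂ)).const_mul (c k : ℂ)

theorem differentiable_powSum : Differentiable ℂ (powSum c) := by
  unfold powSum Finsupp.sum
  fun_prop

end powSum

section stableRoot

variable {C : ℝ}

theorem stableRootDisc_neg_one : stableRootDisc C (-1) = ((-2 * C : ℝ) : ℂ) ^ 2 := by
  rw [stableRootDisc]
  push_cast
  ring

theorem stableRootDisc_neg_one_cpow_half (hC : C < 0) :
    stableRootDisc C (-1) ^ ((1 : ℂ) / 2) = ((-2 * C : ℝ) : ℂ) := by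
  rw [stableRootDisc_neg_one, one_div]
  exact sq_cpow_two_inv (by simp only [ofReal_re]; linarith)

theorem stableRootDisc_neg_one_mem_slitPlane (hC : C ≠ 0) :
    stableRootDisc C (-1) ∈ slitPlane := by
  rw [stableRootDisc_neg_one, ← ofReal_pow]
  exact ofReal_mem_slitPlane.2 (by positivity)

theorem hasDerivAt_stableRootDisc (z : ℂ) :
    HasDerivAt (stableRootDisc C) (4 * z ^ 3 + 4 * (2 * (C : ℂ) ^ 2 - 1) * z) z := by
  refine (((hasDerivAt_pow 4 z).fun_add
    ((hasDerivAt_pow 2 z).const_mul (2 * (2 * (C : ℂ) ^ 2 - 1)))).add_const 1).congr_deriv ?_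
  push_cast
  ring

theorem stableRoot_neg_one (hC : C < 0) : stableRoot C (-1) = 1 := by
  have hC' : (C : ℂ) ≠ 0 := ofReal_ne_zero.2 hC.ne
  rw [stableRoot, stableRootDisc_neg_one_cpow_half hC]
  field_simp
  push_cast
  ring

theorem hasDerivAt_stableRootDisc_cpow_half_neg_one (hC : C < 0) :
    HasDerivAt (fun z => stableRootDisc C z ^ ((1 : ℂ) / 2)) (2 * (C : ℂ)) (-1) := by
  have hC' : (C : ℂ) ≠ 0 := ofReal_ne_zero.2 hC.ne
  refine ((hasDerivAt_stableRootDisc (-1)).cpow_const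
    (stableRootDisc_neg_one_mem_slitPlane hC.ne)).congr_deriv ?_
  rw [show (1 : ℂ) / 2 - 1 = -(1 / 2) by ring, cpow_neg, stableRootDisc_neg_one_cpow_half hC]
  field_simp
  push_cast
  ring

theorem hasDerivAt_stableRoot_neg_one (hC : C < 0) :
    HasDerivAt (stableRoot C) (-1 / C) (-1) := by
  have hC' : (C : ℂ) ≠ 0 := ofReal_ne_zero.2 hC.ne
  have hnum := ((hasDerivAt_pow 2 (-1 : ℂ)).const_sub 1).fun_add
    (hasDerivAt_stableRootDisc_cpow_half_neg_one hC)
  have hden := (hasDerivAt_id' (-1 : ℂ)).const_mul (2 * (C : ℂ))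
  refine (hnum.fun_div hden (by simp [hC'])).congr_deriv ?_
  rw [stableRootDisc_neg_one_cpow_half hC]
  field_simp
  push_cast
  ring

theorem eventually_differentiableAt_stableRoot (hC : C ≠ 0) :
    ∀ᶠ z in 𝓝 (-1 : ℂ), DifferentiableAt ℂ (stableRoot C) z := by
  have hC' : (C : ℂ) ≠ 0 := ofReal_ne_zero.2 hC
  have hdisc : ∀ᶠ z in 𝓝 (-1 : ℂ), stableRootDisc C z ∈ slitPlane :=
    (hasDerivAt_stableRootDisc (-1)).continuousAt.eventually_mem
      (isOpen_slitPlane.mem_nhds (stableRootDisc_neg_one_mem_slitPlane hC))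
  filter_upwards [hdisc, isOpen_ne.mem_nhds (by norm_num : (-1 : ℂ) ≠ 0)] with z hz hz0
  exact ((differentiableAt_id.pow 2).const_sub 1 |>.add
    ((hasDerivAt_stableRootDisc z).differentiableAt.cpow_const hz)).div
    (differentiableAt_id.const_mul _) (by simp [hC', hz0])

end stableRoot

/-- For `C ∈ (-1,0)` and finitely supported `b, b̃ : ℕ → ℝ`, the function
`h(z) = z² - z·Σ_k b_k κ_s(z)^k - Σ_k b̃_k κ_s(z)^k` (with `κ_s` the stable root,
principal complex square root) is complex-differentiable in a neighborhood of `z = -1`,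
with `h(-1) = 1 + Σ b_k - Σ b̃_k` and
`h'(-1) = -(2 + Σ b_k + (1/C)·Σ k(b_k - b̃_k))`. -/
theorem boundary_function_at_minus_one (C : ℝ) (hC : C ∈ Set.Ioo (-1 : ℝ) 0)
    (b btil : ℕ →₀ ℝ) :
    let ks : ℂ → ℂ := fun z =>
      (1 - z ^ 2 + (z ^ 4 + 2 * (2 * (C : ℂ) ^ 2 - 1) * z ^ 2 + 1) ^ ((1 : ℂ) / 2)) /
        (2 * (C : ℂ) * z)
    let h : ℂ → ℂ := fun z =>
      z ^ 2 - z * (b.sum fun k bk => (bk : ℂ) * ks z ^ k)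
        - (btil.sum fun k bk => (bk : ℂ) * ks z ^ k)
    (∀ᶠ z in 𝓝 (-1 : ℂ), DifferentiableAt ℂ h z) ∧
    h (-1) = 1 + (b.sum fun _ bk => (bk : ℂ)) - (btil.sum fun _ bk => (bk : ℂ)) ∧
    deriv h (-1) = -(2 + (b.sum fun _ bk => (bk : ℂ))
      + (1 / (C : ℂ)) * ((b.sum fun k bk => (k : ℂ) * bk)
        - (btil.sum fun k bk => (k : ℂ) * bk))) := by
  intro ks h
  have hC0 : C < 0 := hC.2
  have h_eq : h = fun z => z ^ 2 - z * powSum b (stableRoot C z) - powSum btil (stableRoot C z) :=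
    rfl
  rw [h_eq]
  have hks_val := stableRoot_neg_one hC0
  have hks_deriv := hasDerivAt_stableRoot_neg_one hC0
  have hP := (hasDerivAt_powSum_one b).comp_of_eq (-1) hks_deriv hks_val.symm
  have hQ := (hasDerivAt_powSum_one btil).comp_of_eq (-1) hks_deriv hks_val.symm
  have h_deriv :=
    ((hasDerivAt_pow 2 (-1 : ℂ)).fun_sub ((hasDerivAt_id (-1 : ℂ)).fun_mul hP)).fun_sub hQ
  refine ⟨?_, ?_, ?_⟩
  · filter_upwards [eventually_differentiableAt_stableRoot hC0.ne] with z hz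
    exact ((differentiableAt_id.pow 2).sub (differentiableAt_id.mul
      ((differentiable_powSum b _).comp z hz))).sub ((differentiable_powSum btil _).comp z hz)
  · simp only [hks_val, powSum_one]
    ring
  · refine h_deriv.deriv.trans ?_
    simp only [Function.comp_apply, hks_val, powSum_one, id]
    field_simp
    ring
end

section
/- Let ω ∈ (0, 2) and let C be a real number with 0 < |C| < 1. Then every complex root of the polynomial ψ(z) = z^4 + ((C^2 - 1)ω^2 + 2(ω - 1))z^2 + (ω - 1)^2 has modulus strictly less than 1. -/
open Complex

/-!
Substituting `w = z²` turns `ψ` into the real quadratic `w² + b w + c` with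
`b = (C² - 1)ω² + 2(ω - 1)` and `c = (ω - 1)²`. Its roots lie in the open unit disc by the
Schur–Cohn (Jury) conditions `c < 1` and `|b| < 1 + c`: a pair of non-real roots is
conjugate with product `c`, and a real root is trapped in `(-1, 1)` because the quadratic is
positive at `±1` with its vertex in between. For `ψ` these conditions read
`0 < ω < 2`, `1 + b + c = C²ω² > 0` and `1 - b + c = (2 - ω)² + (1 - C²)ω² > 0`.
-/

lemma im_eq_zero_or_normSq_eq_of_quadratic_root {b c : ℝ} {w : ℂ}
    (hw : w ^ 2 + b * w + c = 0) : w.im = 0 ∨ normSq w = c := by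
  have hre : w.re ^ 2 - w.im ^ 2 + b * w.re + c = 0 := by
    simpa [sq] using congrArg re hw
  have him : w.im * (2 * w.re + b) = 0 := by
    have := congrArg im hw
    simp only [sq, add_im, mul_im, ofReal_re, ofReal_im, zero_im] at this
    linear_combination this
  refine (mul_eq_zero.mp him).imp id fun hvertex => ?_
  rw [normSq_apply]
  linear_combination w.re * hvertex - hre

lemma abs_lt_one_of_quadratic_root {b c x : ℝ} (hc : c < 1) (hb : |b| < 1 + c)
    (hx : x ^ 2 + b * x + c = 0) : |x| < 1 := by
  rw [abs_lt] at hb ⊢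
  constructor <;> by_contra! h
  · nlinarith
  · nlinarith

/-- Schur–Cohn criterion for a monic real quadratic. -/
theorem norm_lt_one_of_quadratic_root {b c : ℝ} (hc : c < 1) (hb : |b| < 1 + c) {w : ℂ}
    (hw : w ^ 2 + b * w + c = 0) : ‖w‖ < 1 := by
  rcases im_eq_zero_or_normSq_eq_of_quadratic_root hw with hreal | hconj
  · have hw_real : w = (w.re : ℂ) := (re_add_im w).symm.trans (by simp [hreal])
    rw [hw_real] at hw ⊢
    rw [norm_real, Real.norm_eq_abs]
    exact abs_lt_one_of_quadratic_root hc hb (by exact_mod_cast hw)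
  · rw [← sq_lt_one_iff₀ (norm_nonneg w), ← normSq_eq_norm_sq, hconj]
    exact hc

/-- For `ω ∈ (0,2)` and `0 < |C| < 1`, every complex root of
`ψ(z) = z⁴ + ((C²-1)ω² + 2(ω-1))z² + (ω-1)²` has modulus strictly less than 1. -/
theorem dissipative_branch_points_in_disc (ω C : ℝ) (hω : ω ∈ Set.Ioo (0 : ℝ) 2)
    (hC0 : 0 < |C|) (hC1 : |C| < 1) :
    ∀ z : ℂ, z ^ 4 + (((C : ℂ) ^ 2 - 1) * (ω : ℂ) ^ 2 + 2 * ((ω : ℂ) - 1)) * z ^ 2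
      + ((ω : ℂ) - 1) ^ 2 = 0 → ‖z‖ < 1 := by
  obtain ⟨hω0, hω2⟩ := hω
  intro z hz
  set b : ℝ := (C ^ 2 - 1) * ω ^ 2 + 2 * (ω - 1)
  set c : ℝ := (ω - 1) ^ 2
  have hC2_pos : 0 < C ^ 2 := by rw [← sq_abs]; positivity
  have hC2_lt : C ^ 2 < 1 := by rw [← sq_abs]; nlinarith
  have hc : c < 1 := by nlinarith
  have hb : |b| < 1 + c := by
    have h_one : 1 + b + c = C ^ 2 * ω ^ 2 := by ring
    have h_neg_one : 1 - b + c = (2 - ω) ^ 2 + (1 - C ^ 2) * ω ^ 2 := by ring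
    rw [abs_lt]
    constructor <;> nlinarith [mul_pos hC2_pos (pow_pos hω0 2), sq_nonneg (2 - ω),
      mul_nonneg (sub_pos.mpr hC2_lt).le (sq_nonneg ω)]
  have hw : (z ^ 2) ^ 2 + b * z ^ 2 + c = 0 := by
    push_cast [b, c]
    linear_combination hz
  have hz2 := norm_lt_one_of_quadratic_root hc hb hw
  rwa [norm_pow, sq_lt_one_iff₀ (norm_nonneg z)] at hz2
end

section
/- Let C be a real number with |C| < 1 and let S be the second Green function of the leap-frog scheme on ℤ with Courant number C. Then for every n ∈ ℕ and every j ∈ ℤ, S_j^n = (1/(2π))·[ ∫_{-π}^{π} exp(i(jξ - n·arcsin(C·sin ξ)))/(2√(1 - C^2 sin^2 ξ)) dξ + (-1)^{n+1} ∫_{-π}^{π} exp(i(jξ + n·arcsin(C·sin ξ)))/(2√(1 - C^2 sin^2 ξ)) dξ ]. -/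
open Real Complex MeasureTheory

noncomputable def Fp (C u s ξ : ℝ) : ℂ :=
  Complex.exp (Complex.I * ((u * ξ + s * Real.arcsin (C * Real.sin ξ) : ℝ) : ℂ)) /
    (2 * (Real.sqrt (1 - C ^ 2 * Real.sin ξ ^ 2) : ℂ))

lemma hden {C : ℝ} (hC : |C| < 1) (ξ : ℝ) : 0 < 1 - C ^ 2 * Real.sin ξ ^ 2 := by
  have h1 : C ^ 2 < 1 := by nlinarith [abs_nonneg C, _root_.sq_abs C]
  nlinarith [Real.sin_sq_le_one ξ, sq_nonneg C, sq_nonneg (Real.sin ξ)]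

lemma hrpos {C : ℝ} (hC : |C| < 1) (ξ : ℝ) : 0 < Real.sqrt (1 - C ^ 2 * Real.sin ξ ^ 2) :=
  Real.sqrt_pos.mpr (hden hC ξ)

lemma Fcont {C : ℝ} (hC : |C| < 1) (u s : ℝ) : Continuous (Fp C u s) := by
  apply Continuous.div
  · apply Complex.continuous_exp.comp
    apply continuous_const.mul
    apply Complex.continuous_ofReal.comp
    exact (continuous_const.mul continuous_id).add
      (continuous_const.mul (Real.continuous_arcsin.comp (continuous_const.mul Real.continuous_sin)))
  · apply continuous_const.mul
    apply Complex.continuous_ofReal.comp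
    exact (Real.continuous_sqrt.comp (by continuity))
  · intro ξ
    have := hrpos hC ξ
    simp only [ne_eq, mul_eq_zero, Complex.ofReal_eq_zero]
    push_neg
    exact ⟨two_ne_zero, by positivity⟩

lemma Fint {C : ℝ} (hC : |C| < 1) (u s : ℝ) :
    IntervalIntegrable (Fp C u s) volume (-Real.pi) Real.pi :=
  (Fcont hC u s).intervalIntegrable _ _

lemma hsinbd {C : ℝ} (hC : |C| < 1) (ξ : ℝ) :
    Real.sin (Real.arcsin (C * Real.sin ξ)) = C * Real.sin ξ := by
  have h : |C * Real.sin ξ| ≤ |C| := by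
    rw [abs_mul]
    exact mul_le_of_le_one_right (abs_nonneg C) (Real.abs_sin_le_one ξ)
  have h2 := h.trans hC.le
  rw [abs_le] at h2
  exact Real.sin_arcsin h2.1 h2.2

lemma Fpt {C : ℝ} (hC : |C| < 1) (u s ξ : ℝ) :
    Fp C u (s - 1) ξ - Fp C u (s + 1) ξ = C * (Fp C (u - 1) s ξ - Fp C (u + 1) s ξ) := by
  set a := Real.arcsin (C * Real.sin ξ) with ha
  have hs : Complex.sin (a : ℂ) = (C : ℂ) * Complex.sin (ξ : ℂ) := by
    rw [← Complex.ofReal_sin, ← Complex.ofReal_sin, hsinbd hC ξ]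
    push_cast; ring
  unfold Fp
  rw [← ha]
  push_cast
  rw [show Complex.I * ((u : ℂ) * ξ + ((s : ℂ) - 1) * a)
      = Complex.I * ((u : ℂ) * ξ + (s : ℂ) * a) + (-(a : ℂ)) * Complex.I by ring,
    show Complex.I * ((u : ℂ) * ξ + ((s : ℂ) + 1) * a)
      = Complex.I * ((u : ℂ) * ξ + (s : ℂ) * a) + ((a : ℂ)) * Complex.I by ring,
    show Complex.I * (((u : ℂ) - 1) * ξ + (s : ℂ) * a)
      = Complex.I * ((u : ℂ) * ξ + (s : ℂ) * a) + (-(ξ : ℂ)) * Complex.I by ring,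
    show Complex.I * (((u : ℂ) + 1) * ξ + (s : ℂ) * a)
      = Complex.I * ((u : ℂ) * ξ + (s : ℂ) * a) + ((ξ : ℂ)) * Complex.I by ring,
    Complex.exp_add, Complex.exp_add, Complex.exp_add, Complex.exp_add,
    Complex.exp_mul_I, Complex.exp_mul_I, Complex.exp_mul_I, Complex.exp_mul_I]
  simp only [Complex.cos_neg, Complex.sin_neg]
  rw [hs]
  ring

lemma key {C : ℝ} (hC : |C| < 1) (u s : ℝ) :
    (∫ ξ in (-Real.pi)..Real.pi, Fp C u (s - 1) ξ)
      - (∫ ξ in (-Real.pi)..Real.pi, Fp C u (s + 1) ξ)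
    = (C : ℂ) * ((∫ ξ in (-Real.pi)..Real.pi, Fp C (u - 1) s ξ)
      - (∫ ξ in (-Real.pi)..Real.pi, Fp C (u + 1) s ξ)) := by
  rw [← intervalIntegral.integral_sub (Fint hC _ _) (Fint hC _ _),
    ← intervalIntegral.integral_sub (Fint hC _ _) (Fint hC _ _),
    ← intervalIntegral.integral_const_mul]
  exact intervalIntegral.integral_congr fun ξ _ => Fpt hC u s ξ

lemma key2 {C : ℝ} (hC : |C| < 1) (u s a b c d : ℝ)
    (ha : a = s - 1) (hb : b = s + 1) (hc : c = u - 1) (hd : d = u + 1) :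
    (∫ ξ in (-Real.pi)..Real.pi, Fp C u a ξ)
      - (∫ ξ in (-Real.pi)..Real.pi, Fp C u b ξ)
    = (C : ℂ) * ((∫ ξ in (-Real.pi)..Real.pi, Fp C c s ξ)
      - (∫ ξ in (-Real.pi)..Real.pi, Fp C d s ξ)) := by
  subst ha hb hc hd; exact key hC u s

noncomputable def Gg (C : ℝ) (n : ℕ) (j : ℤ) : ℂ :=
  (1 / (2 * (Real.pi : ℂ))) *
    ((∫ ξ in (-Real.pi)..Real.pi, Fp C (j : ℝ) (-(n : ℝ)) ξ)
      + (-1 : ℂ) ^ (n + 1) * ∫ ξ in (-Real.pi)..Real.pi, Fp C (j : ℝ) (n : ℝ) ξ)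

lemma Gstep {C : ℝ} (hC : |C| < 1) (n : ℕ) (j : ℤ) :
    Gg C (n + 2) j = Gg C n j + (C : ℂ) * (Gg C (n + 1) (j - 1) - Gg C (n + 1) (j + 1)) := by
  unfold Gg
  push_cast
  have k1 := key2 hC (j : ℝ) (-((n : ℝ) + 1)) (-((n : ℝ) + 2)) (-(n : ℝ)) ((j : ℝ) - 1)
    ((j : ℝ) + 1) (by ring) (by ring) rfl rfl
  have k2 := key2 hC (j : ℝ) ((n : ℝ) + 1) ((n : ℝ)) ((n : ℝ) + 2) ((j : ℝ) - 1)
    ((j : ℝ) + 1) (by ring) (by ring) rfl rfl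
  linear_combination (1 / (2 * (Real.pi : ℂ))) * k1
    - ((1 / (2 * (Real.pi : ℂ))) * (-1 : ℂ) ^ (n + 1)) * k2

lemma base1pt {C : ℝ} (hC : |C| < 1) (u ξ : ℝ) :
    Fp C u (-1) ξ + Fp C u 1 ξ = Complex.exp (Complex.I * ((u : ℂ) * (ξ : ℂ))) := by
  set a := Real.arcsin (C * Real.sin ξ) with ha
  have hcos : Complex.cos (a : ℂ) = ((Real.sqrt (1 - C ^ 2 * Real.sin ξ ^ 2) : ℝ) : ℂ) := by
    rw [← Complex.ofReal_cos, ha, Real.cos_arcsin]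
    norm_num [mul_pow]
  have hr : ((Real.sqrt (1 - C ^ 2 * Real.sin ξ ^ 2) : ℝ) : ℂ) ≠ 0 := by
    simp only [ne_eq, Complex.ofReal_eq_zero]
    exact (hrpos hC ξ).ne'
  unfold Fp
  rw [← ha]
  push_cast
  rw [show Complex.I * ((u : ℂ) * ξ + (-1 : ℂ) * a)
      = Complex.I * ((u : ℂ) * ξ) + (-(a : ℂ)) * Complex.I by ring,
    show Complex.I * ((u : ℂ) * ξ + (1 : ℂ) * a)
      = Complex.I * ((u : ℂ) * ξ) + ((a : ℂ)) * Complex.I by ring,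
    Complex.exp_add, Complex.exp_add, Complex.exp_mul_I, Complex.exp_mul_I]
  simp only [Complex.cos_neg, Complex.sin_neg]
  rw [hcos]
  field_simp
  ring

lemma intexp (j : ℤ) :
    (∫ ξ in (-Real.pi)..Real.pi, Complex.exp (Complex.I * ((j : ℂ) * (ξ : ℂ))))
      = if j = 0 then 2 * (Real.pi : ℂ) else 0 := by
  by_cases hj : j = 0
  · subst hj
    simp only [Int.cast_zero, zero_mul, mul_zero, Complex.exp_zero, if_true]
    rw [intervalIntegral.integral_const]
    simp
    ring
  · rw [if_neg hj]
    have hc : Complex.I * (j : ℂ) ≠ 0 := by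
      simp [Complex.I_ne_zero, Int.cast_ne_zero, hj]
    rw [intervalIntegral.integral_congr (g := fun ξ : ℝ => Complex.exp ((Complex.I * (j : ℂ)) * (ξ : ℂ)))
      (fun ξ _ => by rw [← mul_assoc]),
      integral_exp_mul_complex hc]
    have : Complex.I * (j : ℂ) * ((Real.pi : ℝ) : ℂ)
        = Complex.I * (j : ℂ) * ((-Real.pi : ℝ) : ℂ) + (j : ℂ) * (2 * (Real.pi : ℂ) * Complex.I) := by
      push_cast; ring
    rw [this, Complex.exp_add, Complex.exp_int_mul_two_pi_mul_I]
    simp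

lemma G0 {C : ℝ} (j : ℤ) : Gg C 0 j = 0 := by
  unfold Gg
  norm_num

lemma G1 {C : ℝ} (hC : |C| < 1) (j : ℤ) : Gg C 1 j = if j = 0 then 1 else 0 := by
  unfold Gg
  have h1 : (∫ ξ in (-Real.pi)..Real.pi, Fp C (j : ℝ) (-((1:ℕ) : ℝ)) ξ)
      + ∫ ξ in (-Real.pi)..Real.pi, Fp C (j : ℝ) ((1:ℕ) : ℝ) ξ
      = ∫ ξ in (-Real.pi)..Real.pi, Complex.exp (Complex.I * ((j : ℂ) * (ξ : ℂ))) := by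
    rw [← intervalIntegral.integral_add (Fint hC _ _) (Fint hC _ _)]
    refine intervalIntegral.integral_congr fun ξ _ => ?_
    have := base1pt hC (j : ℝ) ξ
    push_cast at this ⊢
    exact this
  rw [show ((-1 : ℂ)) ^ (1 + 1) = 1 by norm_num, one_mul, h1, intexp]
  have hpi : (2 * (Real.pi : ℂ)) ≠ 0 := by
    simp [Real.pi_ne_zero]
  by_cases hj : j = 0
  · simp only [hj, if_pos rfl]
    exact one_div_mul_cancel hpi
  · simp [hj]

/-- For `|C| < 1` and `S` the second Green function of the leap-frog scheme
on `ℤ`, for every `n ∈ ℕ` and `j ∈ ℤ`,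
`S_j^n = (1/2π)·[∫_{-π}^{π} e^{i(jξ - n·arcsin(C sin ξ))}/(2√(1-C² sin²ξ)) dξ
          + (-1)^{n+1} ∫_{-π}^{π} e^{i(jξ + n·arcsin(C sin ξ))}/(2√(1-C² sin²ξ)) dξ]`. -/
theorem second_green_fourier_representation (C : ℝ) (hC : |C| < 1) (S : ℕ → ℤ → ℝ)
    (hS0 : ∀ j : ℤ, S 0 j = 0)
    (hS1 : ∀ j : ℤ, S 1 j = if j = 0 then 1 else 0)
    (hSrec : ∀ n : ℕ, ∀ j : ℤ, S (n + 2) j = S n j + C * (S (n + 1) (j - 1) - S (n + 1) (j + 1))) :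
    ∀ n : ℕ, ∀ j : ℤ,
      (S n j : ℂ) = (1 / (2 * (Real.pi : ℂ))) *
        ((∫ ξ in (-Real.pi)..Real.pi,
            Complex.exp (Complex.I * (((j : ℝ) * ξ - (n : ℝ) * Real.arcsin (C * Real.sin ξ) : ℝ) : ℂ)) /
              (2 * (Real.sqrt (1 - C ^ 2 * Real.sin ξ ^ 2) : ℂ)))
          + (-1 : ℂ) ^ (n + 1) *
            ∫ ξ in (-Real.pi)..Real.pi,
              Complex.exp (Complex.I * (((j : ℝ) * ξ + (n : ℝ) * Real.arcsin (C * Real.sin ξ) : ℝ) : ℂ)) /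
                (2 * (Real.sqrt (1 - C ^ 2 * Real.sin ξ ^ 2) : ℂ))) := by
  have main : ∀ n : ℕ, (∀ j, (S n j : ℂ) = Gg C n j) ∧ (∀ j, (S (n + 1) j : ℂ) = Gg C (n + 1) j) := by
    intro n
    induction n with
    | zero =>
      constructor
      · intro j; rw [hS0 j, G0]; norm_num
      · intro j
        rw [hS1 j, G1 hC]
        by_cases hj : j = 0 <;> simp [hj]
    | succ m ih =>
      refine ⟨ih.2, fun j => ?_⟩
      rw [show m + 1 + 1 = m + 2 from rfl, hSrec m j]
      push_cast
      rw [ih.1 j, ih.2 (j - 1), ih.2 (j + 1)]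
      have := Gstep hC m j
      push_cast at this
      exact this.symm
  intro n j
  rw [(main n).1 j]
  unfold Gg
  have e1 : (∫ ξ in (-Real.pi)..Real.pi, Fp C (j : ℝ) (-(n : ℝ)) ξ)
      = ∫ ξ in (-Real.pi)..Real.pi,
          Complex.exp (Complex.I * (((j : ℝ) * ξ - (n : ℝ) * Real.arcsin (C * Real.sin ξ) : ℝ) : ℂ)) /
            (2 * (Real.sqrt (1 - C ^ 2 * Real.sin ξ ^ 2) : ℂ)) := by
    refine intervalIntegral.integral_congr fun ξ _ => ?_
    simp only [Fp]
    norm_num [neg_mul, sub_eq_add_neg]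
  rw [e1]
  rfl
end

section
/- Let C ∈ ℝ and let (ε_j^n)_{j∈ℕ, n∈ℕ} be defined by: ε_j^0 = 0 for all j ∈ ℕ; ε_0^1 = 1 and ε_j^1 = 0 for j ≥ 1; and for n ≥ 1: ε_0^{n+1} = 0 and, for j ≥ 1, ε_j^{n+1} = ε_j^{n-1} + C(ε_{j-1}^n - ε_{j+1}^n) + C(1-C)(ε_{j-1}^{n-1} - 2ε_j^{n-1} + ε_{j+1}^{n-1}). Then for every n ≥ 2 and every j ≥ 1 one has: ε_j^n = C^j·(1-C)^{n-1-j}·binom(n-2, j-1) if j ≤ n-1, and ε_j^n = 0 if j ≥ n. -/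
/-- For the leap-frog scheme with dissipation "in the past" on the half-line
`ℕ`, with Dirichlet boundary condition and unit corner datum, one has for all `n ≥ 2` and
`j ≥ 1`: `ε_j^n = C^j (1-C)^{n-1-j} binom(n-2, j-1)` if `j ≤ n-1`, and `ε_j^n = 0` if
`j ≥ n`. -/
theorem binomial_formula_dissipative_leapfrog (C : ℝ)
    (ε : ℕ → ℕ → ℝ)
    (h0 : ∀ j : ℕ, ε 0 j = 0)
    (h10 : ε 1 0 = 1)
    (h1 : ∀ j : ℕ, 1 ≤ j → ε 1 j = 0)
    (hbc : ∀ n : ℕ, ε (n + 2) 0 = 0)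
    (hrec : ∀ n : ℕ, ∀ j : ℕ,
      ε (n + 2) (j + 1) = ε n (j + 1) + C * (ε (n + 1) j - ε (n + 1) (j + 2))
        + C * (1 - C) * (ε n j - 2 * ε n (j + 1) + ε n (j + 2))) :
    ∀ n : ℕ, 2 ≤ n → ∀ j : ℕ, 1 ≤ j →
      (j ≤ n - 1 → ε n j = C ^ j * (1 - C) ^ (n - 1 - j) * (Nat.choose (n - 2) (j - 1) : ℝ)) ∧
      (n ≤ j → ε n j = 0) := by
  have key : ∀ n : ℕ,
      (∀ j : ℕ, ε (n+2) (j+1) = C^(j+1) * (1-C)^(n-j) * (Nat.choose n j : ℝ)) ∧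
      (∀ j : ℕ, ε (n+3) (j+1) = C^(j+1) * (1-C)^(n+1-j) * (Nat.choose (n+1) j : ℝ)) := by
    intro n
    induction n with
    | zero =>
      have P0 : ∀ j : ℕ, ε 2 (j+1) = C^(j+1) * (1-C)^(0-j) * (Nat.choose 0 j : ℝ) := by
        intro j
        rw [hrec 0 j]
        match j with
        | 0 => simp [h0, h10, h1 2 (by omega)]
        | k+1 => simp [h0, h1 (k+1) (by omega), h1 (k+3) (by omega)]
      refine ⟨P0, ?_⟩
      intro j
      rw [hrec 1 j]
      match j with
      | 0 =>
        rw [h1 1 le_rfl, hbc 0, P0 1, h10, h1 2 (by omega)]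
        norm_num
      | 1 =>
        rw [h1 2 (by omega), P0 0, P0 2, h1 1 le_rfl, h1 3 (by omega)]
        norm_num
        ring
      | k+2 =>
        rw [h1 (k+3) (by omega), P0 (k+1), P0 (k+3), h1 (k+2) (by omega),
          h1 (k+4) (by omega)]
        simp [Nat.choose_eq_zero_of_lt (show 1 < k+2 by omega)]
    | succ n ih =>
      refine ⟨ih.2, ?_⟩
      intro j
      rw [show n+1+3 = n+2+2 by ring, hrec (n+2) j]
      have E1 : ∀ k : ℕ, ε (n+2) (k+1) = C^(k+1) * (1-C)^(n-k) * (Nat.choose n k : ℝ) := ih.1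
      have E2 : ∀ k : ℕ, ε (n+3) (k+1) = C^(k+1) * (1-C)^(n+1-k) * (Nat.choose (n+1) k : ℝ) := by
        intro k; simpa using ih.2 k
      have hb3 : ε (n+3) 0 = 0 := by rw [show n+3 = n+1+2 by omega]; exact hbc (n+1)
      match j with
      | 0 =>
        rw [show n+2+1 = n+3 by omega]
        rw [E1 0, hb3, show (0:ℕ)+2 = 1+1 by rfl, E2 1, hbc n, E1 1]
        match n with
        | 0 => norm_num; ring
        | m+1 =>
          simp only [show m+1-0 = m+1 by omega, show m+1+1-1 = m+1 by omega,
            show m+1-1 = m by omega, show m+1+1+1-0 = m+3 by omega,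
            Nat.choose_zero_right, Nat.choose_one_right]
          push_cast
          ring
      | k+1 =>
        rw [show n+2+1 = n+3 by omega, show k+1+2 = k+2+1 by omega]
        rw [E1 (k+1), E2 k, E2 (k+2), E1 k, E1 (k+2)]
        by_cases hA : k + 2 ≤ n
        · obtain ⟨m, rfl⟩ : ∃ m, n = k+m+2 := ⟨n-k-2, by omega⟩
          simp only [show k+m+2-(k+1) = m+1 by omega, show k+m+2+1-k = m+3 by omega,
            show k+m+2+1-(k+2) = m+1 by omega, show k+m+2-k = m+2 by omega,
            show k+m+2-(k+2) = m by omega, show k+m+2+1+1-(k+1) = m+3 by omega,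
            show k+m+2+1 = (k+m+2)+1 by omega, show k+m+2+1+1 = (k+m+3)+1 by omega,
            show k+2 = (k+1)+1 by rfl]
          rw [Nat.choose_succ_succ' (k+m+2) (k+1), Nat.choose_succ_succ' (k+m+3) k,
            show k+m+3 = (k+m+2)+1 by omega, Nat.choose_succ_succ' (k+m+2) k]
          push_cast
          ring
        · by_cases hB : n = k+1
          · subst hB
            simp only [show k+1-(k+1) = 0 by omega, show k+1+1-k = 2 by omega,
              show k+1+1-(k+2) = 0 by omega, show k+1-k = 1 by omega,
              show k+1-(k+2) = 0 by omega, show k+1+1+1-(k+1) = 2 by omega,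
              show k+1+1 = (k+1)+1 by rfl, show k+1+1+1 = (k+2)+1 by omega,
              show k+2 = (k+1)+1 by rfl]
            rw [Nat.choose_self, Nat.choose_succ_succ' (k+1) (k+1),
              Nat.choose_succ_succ' (k+2) k, Nat.choose_succ_succ' (k+1) k,
              Nat.choose_self, Nat.choose_succ_self_right,
              Nat.choose_eq_zero_of_lt (show k+1 < k+2 by omega)]
            push_cast
            ring
          · by_cases hC : n = k
            · subst hC
              simp only [show n-(n+1) = 0 by omega, show n+1-n = 1 by omega,
                show n+1-(n+2) = 0 by omega, show n-n = 0 by omega,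
                show n-(n+2) = 0 by omega, show n+1+1-(n+1) = 1 by omega]
              rw [Nat.choose_self, Nat.choose_succ_self_right,
                Nat.choose_eq_zero_of_lt (show n < n+1 by omega),
                Nat.choose_eq_zero_of_lt (show n+1 < n+2 by omega),
                Nat.choose_eq_zero_of_lt (show n < n+2 by omega),
                show n+1+1 = (n+1)+1 by rfl, Nat.choose_succ_self_right]
              push_cast
              ring
            · by_cases hD : k = n+1
              · subst hD
                simp only [show n+1-(n+1+1) = 0 by omega, show n+1-(n+1) = 0 by omega,
                  show n-(n+1+1) = 0 by omega, show n-(n+1) = 0 by omega,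
                  show n-(n+1+2) = 0 by omega, show n+1+1-(n+1+1) = 0 by omega]
                rw [Nat.choose_self,
                  Nat.choose_eq_zero_of_lt (show n < n+1+1 by omega),
                  Nat.choose_eq_zero_of_lt (show n+1 < n+1+2 by omega),
                  Nat.choose_eq_zero_of_lt (show n < n+1 by omega),
                  Nat.choose_eq_zero_of_lt (show n < n+1+2 by omega),
                  show n+1+1 = (n+1)+1 by rfl, Nat.choose_self]
                push_cast
                ring
              · obtain ⟨t, rfl⟩ : ∃ t, k = n+t+2 := ⟨k-n-2, by omega⟩
                rw [Nat.choose_eq_zero_of_lt (show n < n+t+2+1 by omega),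
                  Nat.choose_eq_zero_of_lt (show n+1 < n+t+2 by omega),
                  Nat.choose_eq_zero_of_lt (show n+1 < n+t+2+2 by omega),
                  Nat.choose_eq_zero_of_lt (show n < n+t+2 by omega),
                  Nat.choose_eq_zero_of_lt (show n < n+t+2+2 by omega),
                  Nat.choose_eq_zero_of_lt (show n+1+1 < n+t+2+1 by omega)]
                push_cast
                ring
  intro n hn j hj
  obtain ⟨m, rfl⟩ : ∃ m, n = m + 2 := ⟨n - 2, by omega⟩
  obtain ⟨k, rfl⟩ : ∃ k, j = k + 1 := ⟨j - 1, by omega⟩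
  have h := (key m).1 k
  constructor
  · intro hle
    rw [h, show m+2-1-(k+1) = m-k by omega, show m+2-2 = m by omega,
      show k+1-1 = k by omega]
  · intro hge
    rw [h, Nat.choose_eq_zero_of_lt (by omega)]
    simp
end
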